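/- arXiv:2104.14499 — 9 statements merged into one kernel-verified Lean document; each statement's English description precedes it below -/
import Mathlib

section
/- Let α ∈ (0,1], let f, g be α-conformable-differentiable at t > 0 with g(t) ≠ 0. Then f/g is α-conformable-differentiable at t and D^α(f/g)(t) = (g(t) D^α f(t) − f(t) D^α g(t)) / g(t)². -/
open Filter Topology Real

/-!
Along the path `ε ↦ t + ε t^{1-α}` the conformable derivative is an ordinary limit of difference
quotients, so the classical proof of the quotient rule applies verbatim: the difference quotient
of `f / g` is an algebraic combination of those of `f` and `g` and of `g` along the path, and the
latter tends to `g t` by continuity.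
-/

section QuotientRule

variable {𝕜 : Type*} [NormedField 𝕜]

/-- Also valid for `h = 0`, where both sides are `0`. -/
theorem div_sub_div_div_eq_of_ne {u v a b : 𝕜} (h : 𝕜) (hv : v ≠ 0) (hb : b ≠ 0) :
    (u / v - a / b) / h = ((u - a) / h * b - a * ((v - b) / h)) / (v * b) := by
  rcases eq_or_ne h 0 with rfl | hh
  · simp
  · field_simp
    ring

theorem Filter.Tendsto.div_sub_div_div {ι : Type*} {l : Filter ι} {u v h : ι → 𝕜}
    {a b A B : 𝕜} (hu : Tendsto (fun i => (u i - a) / h i) l (𝓝 A))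
    (hv : Tendsto (fun i => (v i - b) / h i) l (𝓝 B)) (hvb : Tendsto v l (𝓝 b)) (hb : b ≠ 0) :
    Tendsto (fun i => (u i / v i - a / b) / h i) l (𝓝 ((b * A - a * B) / b ^ 2)) := by
  have hlim : Tendsto (fun i => ((u i - a) / h i * b - a * ((v i - b) / h i)) / (v i * b)) l
      (𝓝 ((A * b - a * B) / (b * b))) :=
    ((hu.mul_const b).sub (hv.const_mul a)).div (hvb.mul_const b) (mul_ne_zero hb hb)
  rw [show (b * A - a * B) / b ^ 2 = (A * b - a * B) / (b * b) by ring]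
  refine hlim.congr' ?_
  filter_upwards [hvb.eventually_ne hb] with i hvi
  exact (div_sub_div_div_eq_of_ne (h i) hvi hb).symm

end QuotientRule

theorem tendsto_add_mul_nhdsNE_zero (t c : ℝ) :
    Tendsto (fun ε : ℝ => t + ε * c) (𝓝[≠] 0) (𝓝 t) := by
  have h : Tendsto (fun ε : ℝ => t + ε * c) (𝓝 0) (𝓝 (t + 0 * c)) :=
    (continuous_const.add (continuous_id.mul continuous_const)).tendsto 0
  simpa using h.mono_left nhdsWithin_le_nhds

theorem stmt_3_general (f g : ℝ → ℝ) (t α Df Dg : ℝ)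
    (hgc : ContinuousAt g t) (hgt : g t ≠ 0)
    (hf : Tendsto (fun ε : ℝ => (f (t + ε * t ^ (1 - α)) - f t) / ε) (𝓝[≠] 0) (𝓝 Df))
    (hg : Tendsto (fun ε : ℝ => (g (t + ε * t ^ (1 - α)) - g t) / ε) (𝓝[≠] 0) (𝓝 Dg)) :
    Tendsto (fun ε : ℝ =>
        (f (t + ε * t ^ (1 - α)) / g (t + ε * t ^ (1 - α)) - f t / g t) / ε)
      (𝓝[≠] 0) (𝓝 ((g t * Df - f t * Dg) / (g t) ^ 2)) :=
  hf.div_sub_div_div hg (hgc.tendsto.comp (tendsto_add_mul_nhdsNE_zero t _)) hgt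

/-- Quotient rule for the conformable fractional derivative. -/
theorem stmt_3 (f g : ℝ → ℝ) (t α Df Dg : ℝ) (ht : 0 < t) (hα : α ∈ Set.Ioc (0:ℝ) 1)
    (hfc : ContinuousAt f t) (hgc : ContinuousAt g t) (hgt : g t ≠ 0)
    (hf : Tendsto (fun ε : ℝ => (f (t + ε * t ^ (1 - α)) - f t) / ε) (𝓝[≠] 0) (𝓝 Df))
    (hg : Tendsto (fun ε : ℝ => (g (t + ε * t ^ (1 - α)) - g t) / ε) (𝓝[≠] 0) (𝓝 Dg)) :
    Tendsto (fun ε : ℝ =>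
        (f (t + ε * t ^ (1 - α)) / g (t + ε * t ^ (1 - α)) - f t / g t) / ε)
      (𝓝[≠] 0) (𝓝 ((g t * Df - f t * Dg) / (g t) ^ 2)) :=
  stmt_3_general f g t α Df Dg hgc hgt hf hg
end

section
/- Let φ : ℝ → ℝ be differentiable and satisfy φ' = μ + λφ² on an open set S, with λ ≠ 0 and λμ > 0. Let k² = 4λμ + 1 and define U(ε) = 6λμ + 6λ² φ(ε)². Then U satisfies U'' + (k² − 1)U − U² = 0 on S. -/
open Filter Topology Real

/-! Along a solution of the Riccati equation `φ' = μ + λφ²`, every derivative of a polynomial in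
`φ` is again a polynomial in `φ`. For `U = 6λμ + 6λ²φ²` this gives
`U'' = 12λ²(μ + 3λφ²)(μ + λφ²) = U² - 4λμ U`, which is the ODE since `k² - 1 = 4λμ`. -/

section Riccati

variable {φ : ℝ → ℝ} {lam mu x : ℝ}

theorem HasDerivAt.const_add_const_mul_sq_of_riccati (a b : ℝ)
    (hφ : HasDerivAt φ (mu + lam * φ x ^ 2) x) :
    HasDerivAt (fun y => a + b * φ y ^ 2) (2 * b * φ x * (mu + lam * φ x ^ 2)) x := by
  refine (((hφ.pow 2).const_mul b).const_add a).congr_deriv ?_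
  push_cast
  ring

theorem HasDerivAt.mul_riccati_of_riccati (hφ : HasDerivAt φ (mu + lam * φ x ^ 2) x) :
    HasDerivAt (fun y => φ y * (mu + lam * φ y ^ 2))
      ((mu + 3 * lam * φ x ^ 2) * (mu + lam * φ x ^ 2)) x := by
  refine (hφ.mul (((hφ.pow 2).const_mul lam).const_add mu)).congr_deriv ?_
  simp only [Pi.pow_apply]
  push_cast
  ring

theorem deriv_deriv_const_add_const_mul_sq_of_riccati {S : Set ℝ} (hS : IsOpen S)
    (hφ : ∀ y ∈ S, HasDerivAt φ (mu + lam * φ y ^ 2) y) (a b : ℝ) (hx : x ∈ S) :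
    deriv (deriv fun y => a + b * φ y ^ 2) x
      = 2 * b * (mu + 3 * lam * φ x ^ 2) * (mu + lam * φ x ^ 2) := by
  have hderiv : deriv (fun y => a + b * φ y ^ 2)
      =ᶠ[𝓝 x] fun y => 2 * b * (φ y * (mu + lam * φ y ^ 2)) :=
    eventually_of_mem (hS.mem_nhds hx) fun y hy =>
      ((hφ y hy).const_add_const_mul_sq_of_riccati a b).deriv.trans (by ring)
  rw [hderiv.deriv_eq, (((hφ x hx).mul_riccati_of_riccati).const_mul (2 * b)).deriv]
  ring

end Riccati

theorem stmt_10_general (lam mu k : ℝ) (φ U : ℝ → ℝ) (S : Set ℝ) (hS : IsOpen S)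
    (hφ : ∀ ε ∈ S, HasDerivAt φ (mu + lam * φ ε ^ 2) ε)
    (hk : k ^ 2 = 4 * lam * mu + 1)
    (hU : U = fun ε => 6 * lam * mu + 6 * lam ^ 2 * φ ε ^ 2) :
    ∀ ε ∈ S, deriv (deriv U) ε + (k ^ 2 - 1) * U ε - U ε ^ 2 = 0 := by
  intro ε hε
  subst hU
  rw [deriv_deriv_const_add_const_mul_sq_of_riccati hS hφ _ _ hε, hk]
  ring

/-- Set 2 solution of the reduced Boussinesq ODE U'' + (k²−1)U − U² = 0. -/
theorem stmt_10 (lam mu k : ℝ) (φ U : ℝ → ℝ) (S : Set ℝ) (hS : IsOpen S)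
    (hlam : lam ≠ 0) (h : lam * mu > 0)
    (hφ : ∀ ε ∈ S, HasDerivAt φ (mu + lam * φ ε ^ 2) ε)
    (hk : k ^ 2 = 4 * lam * mu + 1)
    (hU : U = fun ε => 6 * lam * mu + 6 * lam ^ 2 * φ ε ^ 2) :
    ∀ ε ∈ S, deriv (deriv U) ε + (k ^ 2 - 1) * U ε - U ε ^ 2 = 0 :=
  stmt_10_general lam mu k φ U S hS hφ hk hU
end

section
/- Let φ : ℝ → ℝ be differentiable and satisfy φ' = μ + λφ² on an open set S where φ ≠ 0, with λ ≠ 0, μ ≠ 0. Let k² = 4λμ + 1 and define U(ε) = 6λμ + 6μ² φ(ε)^{−2}. Then U satisfies U'' + (k² − 1)U − U² = 0 on S. -/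
/-!
The reciprocal `ψ = 1/φ` again solves a Riccati equation, `ψ' = -(λ + μψ²)`. Hence
`U = 6λμ + 6μ²ψ²` has derivatives that are polynomials in `ψ`, namely
`U' = -12μ²ψ(λ + μψ²)` and `U'' = 12μ²(λ + 3μψ²)(λ + μψ²)`, and since `k² - 1 = 4λμ` the
equation `U'' + (k² - 1)U = U²` becomes a polynomial identity in `ψ`.
-/

open Filter Topology

theorem deriv_deriv_eq_of_hasDerivAt_of_isOpen {𝕜 F : Type*} [NontriviallyNormedField 𝕜]
    [NormedAddCommGroup F] [NormedSpace 𝕜 F] {f f' : 𝕜 → F} {f'' : F} {S : Set 𝕜} {x : 𝕜}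
    (hS : IsOpen S) (hf : ∀ y ∈ S, HasDerivAt f (f' y) y) (hx : x ∈ S)
    (hf' : HasDerivAt f' f'' x) : deriv (deriv f) x = f'' := by
  have hderiv : deriv f =ᶠ[𝓝 x] f' := by
    filter_upwards [hS.mem_nhds hx] with y hy
    exact (hf y hy).deriv
  rw [hderiv.deriv_eq, hf'.deriv]

theorem HasDerivAt.inv_of_riccati {φ : ℝ → ℝ} {lam mu x : ℝ}
    (hφ : HasDerivAt φ (mu + lam * φ x ^ 2) x) (hx : φ x ≠ 0) :
    HasDerivAt (fun y => (φ y)⁻¹) (-lam + -mu * (φ x)⁻¹ ^ 2) x := by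
  refine (hφ.inv hx).congr_deriv ?_
  field_simp
  ring

section Riccati

variable {ψ : ℝ → ℝ} {a b : ℝ}

theorem HasDerivAt.const_add_mul_sq_of_riccati {x : ℝ}
    (hψ : HasDerivAt ψ (a + b * ψ x ^ 2) x) (c d : ℝ) :
    HasDerivAt (fun y => c + d * ψ y ^ 2) (2 * d * (a * ψ x + b * ψ x ^ 3)) x := by
  refine ((hψ.pow 2).const_mul d |>.const_add c).congr_deriv ?_
  ring

theorem HasDerivAt.mul_add_mul_cube_of_riccati {x : ℝ}
    (hψ : HasDerivAt ψ (a + b * ψ x ^ 2) x) (e : ℝ) :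
    HasDerivAt (fun y => e * (a * ψ y + b * ψ y ^ 3))
      (e * (a + 3 * b * ψ x ^ 2) * (a + b * ψ x ^ 2)) x := by
  refine ((hψ.const_mul a).add ((hψ.pow 3).const_mul b) |>.const_mul e).congr_deriv ?_
  ring

theorem deriv_deriv_const_add_mul_sq_of_riccati {S : Set ℝ} (hS : IsOpen S)
    (hψ : ∀ y ∈ S, HasDerivAt ψ (a + b * ψ y ^ 2) y) (c d : ℝ) {x : ℝ} (hx : x ∈ S) :
    deriv (deriv fun y => c + d * ψ y ^ 2) x
      = 2 * d * (a + 3 * b * ψ x ^ 2) * (a + b * ψ x ^ 2) :=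
  deriv_deriv_eq_of_hasDerivAt_of_isOpen hS
    (fun y hy => (hψ y hy).const_add_mul_sq_of_riccati c d) hx
    ((hψ x hx).mul_add_mul_cube_of_riccati (2 * d))

end Riccati

theorem stmt_11_general (lam mu k : ℝ) (φ U : ℝ → ℝ) (S : Set ℝ) (hS : IsOpen S)
    (hφ0 : ∀ ε ∈ S, φ ε ≠ 0)
    (hφ : ∀ ε ∈ S, HasDerivAt φ (mu + lam * φ ε ^ 2) ε)
    (hk : k ^ 2 = 4 * lam * mu + 1)
    (hU : U = fun ε => 6 * lam * mu + 6 * mu ^ 2 / φ ε ^ 2) :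
    ∀ ε ∈ S, deriv (deriv U) ε + (k ^ 2 - 1) * U ε - U ε ^ 2 = 0 := by
  set ψ : ℝ → ℝ := fun y => (φ y)⁻¹
  have hψ : ∀ y ∈ S, HasDerivAt ψ (-lam + -mu * ψ y ^ 2) y :=
    fun y hy => (hφ y hy).inv_of_riccati (hφ0 y hy)
  have hUψ : U = fun y => 6 * lam * mu + 6 * mu ^ 2 * ψ y ^ 2 := by
    simp only [hU, ψ, div_eq_mul_inv, inv_pow]
  intro ε hε
  rw [hUψ, deriv_deriv_const_add_mul_sq_of_riccati hS hψ _ _ hε, hk]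
  ring

/-- Set 3 solution of the reduced Boussinesq ODE U'' + (k²−1)U − U² = 0. -/
theorem stmt_11 (lam mu k : ℝ) (φ U : ℝ → ℝ) (S : Set ℝ) (hS : IsOpen S)
    (hlam : lam ≠ 0) (hmu : mu ≠ 0) (hφ0 : ∀ ε ∈ S, φ ε ≠ 0)
    (hφ : ∀ ε ∈ S, HasDerivAt φ (mu + lam * φ ε ^ 2) ε)
    (hk : k ^ 2 = 4 * lam * mu + 1)
    (hU : U = fun ε => 6 * lam * mu + 6 * mu ^ 2 / φ ε ^ 2) :
    ∀ ε ∈ S, deriv (deriv U) ε + (k ^ 2 - 1) * U ε - U ε ^ 2 = 0 :=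
  stmt_11_general lam mu k φ U S hS hφ0 hφ hk hU
end

section
/- Let φ satisfy φ' = μ + λφ² on an open set S where φ ≠ 0, with λ, μ ∈ ℝ. Let k² = 16λμ + 1 and define U(ε) = 12λμ + 6λ² φ(ε)² + 6μ² φ(ε)^{−2}. Then U satisfies U'' + (k² − 1)U − U² = 0 on S. -/
open Filter Topology Real

/-!
Since `φ' = F(φ)` with `F(y) = μ + λ y²`, every function `G ∘ φ` of the solution is again a
function of `φ`: `(G ∘ φ)' = (G' F) ∘ φ` and `(G ∘ φ)'' = ((G' F)' F) ∘ φ`. For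
`G(y) = 12λμ + 6λ²y² + 6μ²/y²` the ODE for `U = G ∘ φ` thus becomes an identity between
Laurent polynomials in `y = φ(ε) ≠ 0`, which holds because `k² - 1 = 16λμ`.
-/

theorem deriv_deriv_comp_of_hasDerivAt_autonomous {S : Set ℝ} (hS : IsOpen S)
    {φ F G G' u'' : ℝ → ℝ} (hφ : ∀ x ∈ S, HasDerivAt φ (F (φ x)) x)
    (hG : ∀ x ∈ S, HasDerivAt G (G' (φ x)) (φ x))
    (hG' : ∀ x ∈ S, HasDerivAt (fun y => G' y * F y) (u'' x) (φ x))
    {x : ℝ} (hx : x ∈ S) :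
    deriv (deriv fun t => G (φ t)) x = u'' x * F (φ x) := by
  have hfirst : deriv (fun t => G (φ t)) =ᶠ[𝓝 x] fun t => G' (φ t) * F (φ t) :=
    eventually_of_mem (hS.mem_nhds hx) fun y hy => ((hG y hy).comp y (hφ y hy)).deriv
  rw [hfirst.deriv_eq]
  exact ((hG' x hx).comp x (hφ x hx)).deriv

section BoussinesqProfile

variable (lam mu : ℝ) {y : ℝ}

theorem hasDerivAt_boussinesqProfile (hy : y ≠ 0) :
    HasDerivAt (fun y => 12 * lam * mu + 6 * lam ^ 2 * y ^ 2 + 6 * mu ^ 2 / y ^ 2)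
      (12 * lam ^ 2 * y - 12 * mu ^ 2 / y ^ 3) y := by
  have h := ((hasDerivAt_pow 2 y).const_mul (6 * lam ^ 2)).const_add (12 * lam * mu) |>.fun_add
    ((hasDerivAt_const y (6 * mu ^ 2)).fun_div (hasDerivAt_pow 2 y) (pow_ne_zero 2 hy))
  refine h.congr_deriv ?_
  norm_num
  field_simp
  ring

theorem hasDerivAt_boussinesqProfile_deriv_mul_riccati (hy : y ≠ 0) :
    HasDerivAt (fun y => (12 * lam ^ 2 * y - 12 * mu ^ 2 / y ^ 3) * (mu + lam * y ^ 2))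
      (12 * lam ^ 2 * mu + 36 * lam ^ 3 * y ^ 2 + 12 * lam * mu ^ 2 / y ^ 2
        + 36 * mu ^ 3 / y ^ 4) y := by
  have h := ((hasDerivAt_id' y).const_mul (12 * lam ^ 2) |>.fun_sub
    ((hasDerivAt_const y (12 * mu ^ 2)).fun_div (hasDerivAt_pow 3 y) (pow_ne_zero 3 hy))).fun_mul
    (((hasDerivAt_pow 2 y).const_mul lam).const_add mu)
  refine h.congr_deriv ?_
  norm_num
  field_simp
  ring

end BoussinesqProfile

/-- Set 1 solution of the reduced Boussinesq ODE U'' + (k²−1)U − U² = 0. -/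
theorem stmt_12 (lam mu k : ℝ) (φ U : ℝ → ℝ) (S : Set ℝ) (hS : IsOpen S)
    (hφ0 : ∀ ε ∈ S, φ ε ≠ 0)
    (hφ : ∀ ε ∈ S, HasDerivAt φ (mu + lam * φ ε ^ 2) ε)
    (hk : k ^ 2 = 16 * lam * mu + 1)
    (hU : U = fun ε => 12 * lam * mu + 6 * lam ^ 2 * φ ε ^ 2 + 6 * mu ^ 2 / φ ε ^ 2) :
    ∀ ε ∈ S, deriv (deriv U) ε + (k ^ 2 - 1) * U ε - U ε ^ 2 = 0 := by
  intro ε hε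
  have hU'' := deriv_deriv_comp_of_hasDerivAt_autonomous hS
    (F := fun y => mu + lam * y ^ 2) hφ
    (fun x hx => hasDerivAt_boussinesqProfile lam mu (hφ0 x hx))
    (fun x hx => hasDerivAt_boussinesqProfile_deriv_mul_riccati lam mu (hφ0 x hx)) hε
  have hne := hφ0 ε hε
  subst hU
  rw [hU'', hk]
  field_simp
  ring
end

section
/- Let φ satisfy φ' = μ + λφ² on an open set S where φ ≠ 0. Let k² = 1 − 16λμ and define U(ε) = −4λμ + 6λ² φ(ε)² + 6μ² φ(ε)^{−2}. Then U satisfies U'' + (k² − 1)U − U² = 0 on S. -/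
/-!
With `ψ = λφ - μ/φ` one has `λ²φ² + μ²/φ² = ψ² + 2λμ`, so `U = 6ψ² + 8λμ`, and the Riccati
equation `φ' = μ + λφ²` turns into the Riccati equation `ψ' = (λφ + μ/φ)² = ψ² + 4λμ`.
For any solution of `ψ' = ψ² + c`, the function `6ψ² + 2c` solves `U'' - 4cU - U² = 0`,
and `-4c = -16λμ = k² - 1`.
-/

open Filter Topology

theorem hasDerivAt_mul_sub_div_of_riccati {φ : ℝ → ℝ} {lam mu x : ℝ} (hx : φ x ≠ 0)
    (hφ : HasDerivAt φ (mu + lam * φ x ^ 2) x) :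
    HasDerivAt (fun y => lam * φ y - mu / φ y)
      ((lam * φ x - mu / φ x) ^ 2 + 4 * lam * mu) x := by
  refine ((hφ.const_mul lam).fun_sub ((hasDerivAt_const x mu).fun_div hφ hx)).congr_deriv ?_
  field_simp
  ring

theorem deriv_eventuallyEq_of_forall_hasDerivAt {𝕜 F : Type*} [NontriviallyNormedField 𝕜]
    [NormedAddCommGroup F] [NormedSpace 𝕜 F] {f f' : 𝕜 → F} {S : Set 𝕜}
    (hS : IsOpen S) (hf : ∀ x ∈ S, HasDerivAt f (f' x) x) {x : 𝕜} (hx : x ∈ S) :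
    deriv f =ᶠ[𝓝 x] f' := by
  filter_upwards [hS.mem_nhds hx] with y hy
  exact (hf y hy).deriv

theorem hasDerivAt_of_eqOn_sq_riccati {ψ U : ℝ → ℝ} {S : Set ℝ} {c : ℝ} (hS : IsOpen S)
    (hψ : ∀ x ∈ S, HasDerivAt ψ (ψ x ^ 2 + c) x)
    (hU : S.EqOn U (fun x => 6 * ψ x ^ 2 + 2 * c)) :
    ∀ x ∈ S, HasDerivAt U (12 * ψ x ^ 3 + 12 * c * ψ x) x := by
  intro x hx
  refine HasDerivAt.congr_of_eventuallyEq ?_ (hU.eventuallyEq_of_mem (hS.mem_nhds hx))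
  refine ((((hψ x hx).fun_pow 2).const_mul 6).add_const (2 * c)).congr_deriv ?_
  push_cast
  ring

theorem deriv_deriv_sub_sub_sq_eq_zero_of_eqOn_sq_riccati {ψ U : ℝ → ℝ} {S : Set ℝ} {c : ℝ}
    (hS : IsOpen S) (hψ : ∀ x ∈ S, HasDerivAt ψ (ψ x ^ 2 + c) x)
    (hU : S.EqOn U (fun x => 6 * ψ x ^ 2 + 2 * c)) :
    ∀ x ∈ S, deriv (deriv U) x - 4 * c * U x - U x ^ 2 = 0 := by
  intro x hx
  have hU' := deriv_eventuallyEq_of_forall_hasDerivAt hS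
    (hasDerivAt_of_eqOn_sq_riccati hS hψ hU) hx
  have hU'' : HasDerivAt (fun y => 12 * ψ y ^ 3 + 12 * c * ψ y)
      (12 * (3 * ψ x ^ 2 * (ψ x ^ 2 + c)) + 12 * c * (ψ x ^ 2 + c)) x := by
    refine ((((hψ x hx).fun_pow 3).const_mul 12).fun_add
      ((hψ x hx).const_mul (12 * c))).congr_deriv ?_
    push_cast
    ring
  rw [hU'.deriv_eq, hU''.deriv, hU hx]
  ring

/-- Set 6 solution of the reduced Boussinesq ODE U'' + (k²−1)U − U² = 0. -/
theorem stmt_13 (lam mu k : ℝ) (φ U : ℝ → ℝ) (S : Set ℝ) (hS : IsOpen S)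
    (hφ0 : ∀ ε ∈ S, φ ε ≠ 0)
    (hφ : ∀ ε ∈ S, HasDerivAt φ (mu + lam * φ ε ^ 2) ε)
    (hk : k ^ 2 = 1 - 16 * lam * mu)
    (hU : U = fun ε => -4 * lam * mu + 6 * lam ^ 2 * φ ε ^ 2 + 6 * mu ^ 2 / φ ε ^ 2) :
    ∀ ε ∈ S, deriv (deriv U) ε + (k ^ 2 - 1) * U ε - U ε ^ 2 = 0 := by
  set ψ : ℝ → ℝ := fun y => lam * φ y - mu / φ y
  have hψ : ∀ x ∈ S, HasDerivAt ψ (ψ x ^ 2 + 4 * lam * mu) x := fun x hx =>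
    hasDerivAt_mul_sub_div_of_riccati (hφ0 x hx) (hφ x hx)
  have hUψ : S.EqOn U (fun x => 6 * ψ x ^ 2 + 2 * (4 * lam * mu)) := by
    intro x hx
    have hx0 := hφ0 x hx
    simp only [hU, ψ]
    field_simp
    ring
  intro ε hε
  have hode := deriv_deriv_sub_sub_sq_eq_zero_of_eqOn_sq_riccati hS hψ hUψ ε hε
  rw [hk]
  linarith
end

section
/- Let φ satisfy φ' = μ + λφ² on an open set S, with k² = 1 − 4λμ, and define U(ε) = 2λμ + 6λ² φ(ε)². Then U satisfies U'' + (k² − 1)U − U² = 0 on S. -/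
open Filter Topology

/-!
Along a solution of the autonomous equation `φ' = P(φ)`, differentiating `Q(φ)` amounts to
applying the vector field `Q ↦ Q' · P` to the polynomial `Q`. Applying it twice to
`Q = 2λμ + 6λ²X²` with `P = μ + λX²` turns the claim into a polynomial identity in `φ`.
-/

namespace Polynomial

variable {P : ℝ[X]} {φ : ℝ → ℝ} {S : Set ℝ}

theorem hasDerivAt_eval_comp_of_hasDerivAt_eq_eval
    (hφ : ∀ x ∈ S, HasDerivAt φ (P.eval (φ x)) x) (Q : ℝ[X]) {x : ℝ} (hx : x ∈ S) :
    HasDerivAt (fun t => Q.eval (φ t)) ((derivative Q * P).eval (φ x)) x := by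
  rw [eval_mul]
  exact (Q.hasDerivAt (φ x)).comp x (hφ x hx)

theorem deriv_eval_comp_eventuallyEq (hS : IsOpen S)
    (hφ : ∀ x ∈ S, HasDerivAt φ (P.eval (φ x)) x) (Q : ℝ[X]) {x : ℝ} (hx : x ∈ S) :
    deriv (fun t => Q.eval (φ t)) =ᶠ[𝓝 x] fun t => (derivative Q * P).eval (φ t) :=
  eventually_of_mem (hS.mem_nhds hx) fun _ ht =>
    (hasDerivAt_eval_comp_of_hasDerivAt_eq_eval hφ Q ht).deriv

theorem deriv_deriv_eval_comp (hS : IsOpen S)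
    (hφ : ∀ x ∈ S, HasDerivAt φ (P.eval (φ x)) x) (Q : ℝ[X]) {x : ℝ} (hx : x ∈ S) :
    deriv (deriv fun t => Q.eval (φ t)) x =
      (derivative (derivative Q * P) * P).eval (φ x) := by
  rw [(deriv_eval_comp_eventuallyEq hS hφ Q hx).deriv_eq]
  exact (hasDerivAt_eval_comp_of_hasDerivAt_eq_eval hφ _ hx).deriv

end Polynomial

open Polynomial in
/-- Set 4 solution of the reduced Boussinesq ODE U'' + (k²−1)U − U² = 0. -/
theorem stmt_14 (lam mu k : ℝ) (φ U : ℝ → ℝ) (S : Set ℝ) (hS : IsOpen S)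
    (hφ : ∀ ε ∈ S, HasDerivAt φ (mu + lam * φ ε ^ 2) ε)
    (hk : k ^ 2 = 1 - 4 * lam * mu)
    (hU : U = fun ε => 2 * lam * mu + 6 * lam ^ 2 * φ ε ^ 2) :
    ∀ ε ∈ S, deriv (deriv U) ε + (k ^ 2 - 1) * U ε - U ε ^ 2 = 0 := by
  intro ε hε
  let P : ℝ[X] := C mu + C lam * X ^ 2
  let Q : ℝ[X] := C (2 * lam * mu) + C (6 * lam ^ 2) * X ^ 2
  have hφP : ∀ x ∈ S, HasDerivAt φ (P.eval (φ x)) x := by simpa [P] using hφ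
  have hUQ : U = fun t => Q.eval (φ t) := by simp [hU, Q]
  rw [hUQ, deriv_deriv_eval_comp hS hφP Q hε, hk]
  simp only [P, Q, derivative_C, derivative_mul, zero_mul, derivative_X_pow_succ,
    Nat.cast_one, map_add, map_one, pow_one, zero_add, derivative_one, add_zero, derivative_X,
    mul_one, eval_mul, eval_add, eval_C, eval_one, eval_pow, eval_X, sub_sub_cancel_left, neg_mul]
  ring
end

section
/- Let β, γ, λ, μ ∈ ℝ with β ≠ 0, and let φ satisfy φ' = μ + λφ² on an open set S where φ ≠ 0. Let k² = −4λγμ and define U(ε) = 2λγμ/β + (6μ²γ/β) φ(ε)^{−2}. Then U satisfies −k² U + β U² − γ U'' = 0 on S. -/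
/-!
The reciprocal `v = 1/φ` of a Riccati solution is again a Riccati solution, and `U` is affine
in `v²`. Along a Riccati flow `(v²)''` is a polynomial in `v²`, so the ODE for `U` reduces to a
polynomial identity in `v²` whose coefficients vanish because `k² = -4λγμ`.
-/

open Filter Topology Real

variable {𝕜 : Type*} [NontriviallyNormedField 𝕜] {w : 𝕜 → 𝕜} {a b : 𝕜}

theorem hasDerivAt_inv_of_riccati {x : 𝕜} (hw : HasDerivAt w (a + b * w x ^ 2) x)
    (hx : w x ≠ 0) : HasDerivAt (fun y => (w y)⁻¹) (-b + -a * (w x)⁻¹ ^ 2) x :=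
  (hw.inv hx).congr_deriv (by field_simp; ring)

theorem deriv_deriv_sq_of_riccati {S : Set 𝕜} (hS : IsOpen S)
    (hw : ∀ y ∈ S, HasDerivAt w (a + b * w y ^ 2) y) {x : 𝕜} (hx : x ∈ S) :
    deriv (deriv fun y => w y ^ 2) x = 2 * (a + 3 * b * w x ^ 2) * (a + b * w x ^ 2) := by
  have hsq : ∀ y ∈ S, HasDerivAt (fun y => w y ^ 2) (2 * a * w y + 2 * b * w y ^ 3) y :=
    fun y hy => ((hw y hy).pow 2).congr_deriv (by push_cast; ring)
  have hsq_deriv : HasDerivAt (fun y => 2 * a * w y + 2 * b * w y ^ 3)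
      (2 * (a + 3 * b * w x ^ 2) * (a + b * w x ^ 2)) x :=
    (((hw x hx).const_mul (2 * a)).add (((hw x hx).pow 3).const_mul (2 * b))).congr_deriv
      (by push_cast; ring)
  have hderiv : deriv (fun y => w y ^ 2) =ᶠ[𝓝 x] fun y => 2 * a * w y + 2 * b * w y ^ 3 := by
    filter_upwards [hS.mem_nhds hx] with y hy using (hsq y hy).deriv
  rw [hderiv.deriv_eq, hsq_deriv.deriv]

/-- Set 4 solution of the reduced coupled Boussinesq ODE −k²U + βU² − γU'' = 0. -/
theorem stmt_17 (beta gamma lam mu k : ℝ) (hbeta : beta ≠ 0) (φ U : ℝ → ℝ) (S : Set ℝ)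
    (hS : IsOpen S) (hφ0 : ∀ ε ∈ S, φ ε ≠ 0)
    (hφ : ∀ ε ∈ S, HasDerivAt φ (mu + lam * φ ε ^ 2) ε)
    (hk : k ^ 2 = -(4 * lam * gamma * mu))
    (hU : U = fun ε => 2 * lam * gamma * mu / beta + 6 * mu ^ 2 * gamma / beta / φ ε ^ 2) :
    ∀ ε ∈ S, -(k ^ 2) * U ε + beta * U ε ^ 2 - gamma * deriv (deriv U) ε = 0 := by
  intro ε hε
  have hinv : ∀ y ∈ S, HasDerivAt (fun y => (φ y)⁻¹) (-lam + -mu * (φ y)⁻¹ ^ 2) y :=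
    fun y hy => hasDerivAt_inv_of_riccati (hφ y hy) (hφ0 y hy)
  have hU' : U = fun y =>
      2 * lam * gamma * mu / beta + 6 * mu ^ 2 * gamma / beta * (φ y)⁻¹ ^ 2 := by
    simp only [hU, inv_pow, div_eq_mul_inv]
  have hU'' : deriv (deriv U) ε =
      6 * mu ^ 2 * gamma / beta * deriv (deriv fun y => (φ y)⁻¹ ^ 2) ε := by
    rw [hU', deriv_const_add', deriv_const_mul_field', deriv_const_mul_field]
  rw [hU'', deriv_deriv_sq_of_riccati hS hinv hε, hk, hU]
  field_simp [hφ0 ε hε]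
  ring
end

section
/- Let β, γ, λ, μ ∈ ℝ with β ≠ 0, and let φ satisfy φ' = μ + λφ² on an open set S where φ ≠ 0. Let k² = 16λγμ and define U(ε) = 12λγμ/β + (6λ²γ/β) φ(ε)² + (6μ²γ/β) φ(ε)^{−2}. Then U satisfies −k² U + β U² − γ U'' = 0 on S. -/
open Filter Topology Real

/-! Along a solution of the Riccati equation `φ' = μ + λφ²`, differentiation maps `φ ^ n` to
`n (μ φ ^ (n - 1) + λ φ ^ (n + 1))`, so `U`, `U'` and `U''` are Laurent polynomials in `φ`, and
the equation reduces to an identity between Laurent polynomials once `k² = 16λγμ` is inserted. -/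

theorem deriv_deriv_eq_of_hasDerivAt {𝕜 F : Type*} [NontriviallyNormedField 𝕜]
    [NormedAddCommGroup F] [NormedSpace 𝕜 F] {f f' : 𝕜 → F} {f'' : F} {S : Set 𝕜} {x : 𝕜}
    (hS : IsOpen S) (hx : x ∈ S) (hf : ∀ y ∈ S, HasDerivAt f (f' y) y)
    (hf' : HasDerivAt f' f'' x) : deriv (deriv f) x = f'' := by
  have hderiv : deriv f =ᶠ[𝓝 x] f' :=
    eventually_of_mem (hS.mem_nhds hx) fun y hy => (hf y hy).deriv
  rw [hderiv.deriv_eq, hf'.deriv]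

theorem HasDerivAt.zpow_of_riccati {φ : ℝ → ℝ} {lam mu x : ℝ}
    (hφ : HasDerivAt φ (mu + lam * φ x ^ 2) x) (hφ0 : φ x ≠ 0) (n : ℤ) :
    HasDerivAt (fun y => φ y ^ n) (n * (mu * φ x ^ (n - 1) + lam * φ x ^ (n + 1))) x := by
  refine ((hasDerivAt_zpow n (φ x) (Or.inl hφ0)).comp x hφ).congr_deriv ?_
  rw [show n + 1 = n - 1 + 2 by ring, zpow_add₀ hφ0]
  norm_cast
  ring

/-- Set 5 solution of the reduced coupled Boussinesq ODE −k²U + βU² − γU'' = 0. -/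
theorem stmt_18 (beta gamma lam mu k : ℝ) (hbeta : beta ≠ 0) (φ U : ℝ → ℝ) (S : Set ℝ)
    (hS : IsOpen S) (hφ0 : ∀ ε ∈ S, φ ε ≠ 0)
    (hφ : ∀ ε ∈ S, HasDerivAt φ (mu + lam * φ ε ^ 2) ε)
    (hk : k ^ 2 = 16 * lam * gamma * mu)
    (hU : U = fun ε => 12 * lam * gamma * mu / beta + 6 * lam ^ 2 * gamma / beta * φ ε ^ 2 +
      6 * mu ^ 2 * gamma / beta / φ ε ^ 2) :
    ∀ ε ∈ S, -(k ^ 2) * U ε + beta * U ε ^ 2 - gamma * deriv (deriv U) ε = 0 := by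
  intro ε hε
  set a := 6 * lam ^ 2 * gamma / beta
  set b := 6 * mu ^ 2 * gamma / beta
  have hU_zpow : U = fun x => 12 * lam * gamma * mu / beta + a * φ x ^ (2 : ℤ) +
      b * φ x ^ (-2 : ℤ) := by
    simp only [hU, zpow_neg, div_eq_mul_inv, zpow_ofNat]
  have hU' : ∀ x ∈ S, HasDerivAt U (2 * a * (mu * φ x ^ (1 : ℤ) + lam * φ x ^ (3 : ℤ)) -
      2 * b * (mu * φ x ^ (-3 : ℤ) + lam * φ x ^ (-1 : ℤ))) x := by
    intro x hx
    rw [hU_zpow]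
    have hsq := (hφ x hx).zpow_of_riccati (hφ0 x hx) 2
    have hinv := (hφ x hx).zpow_of_riccati (hφ0 x hx) (-2)
    exact (((hasDerivAt_const x _).add (hsq.const_mul a)).add (hinv.const_mul b)).congr_deriv
      (by norm_num; ring)
  have hφε := (hφ ε hε).zpow_of_riccati (hφ0 ε hε)
  have hU'' := ((((hφε 1).const_mul mu).add ((hφε 3).const_mul lam)).const_mul (2 * a)).sub
    ((((hφε (-3)).const_mul mu).add ((hφε (-1)).const_mul lam)).const_mul (2 * b))
  rw [deriv_deriv_eq_of_hasDerivAt hS hε hU' hU'', hU, hk]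
  have hφε0 := hφ0 ε hε
  norm_num [zpow_neg, a, b]
  field_simp
  ring
end

section
/- Let β, γ, C, D ∈ ℝ with β ≠ 0, C ≠ 0, and k = 0. Then U(ε) = (6γ/β) C²/(Cε + D)² satisfies β U² − γ U'' = 0 (i.e., −k²U + βU² − γU'' = 0 with k² = 4λγμ and μ = 0) at every ε with Cε + D ≠ 0. -/
open Filter Topology Real

theorem hasDerivAt_div_linear_pow (a C D x : ℝ) (n : ℕ) (hx : C * x + D ≠ 0) :
    HasDerivAt (fun y => a / (C * y + D) ^ n) (-n * a * C / (C * x + D) ^ (n + 1)) x := by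
  have hlin : HasDerivAt (fun y : ℝ => C * y + D) C x := by
    simpa using ((hasDerivAt_id x).const_mul C).add_const D
  refine ((hasDerivAt_const x a).div (hlin.fun_pow n) (pow_ne_zero n hx)).congr_deriv ?_
  cases n with
  | zero => simp
  | succ m =>
    simp only [Nat.add_sub_cancel]
    field_simp
    push_cast
    ring

theorem deriv_deriv_div_linear_sq (a C D x : ℝ) (hx : C * x + D ≠ 0) :
    deriv (deriv fun y => a / (C * y + D) ^ 2) x = 6 * a * C ^ 2 / (C * x + D) ^ 4 := by
  have hnhds : {y : ℝ | C * y + D ≠ 0} ∈ 𝓝 x :=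
    (isOpen_ne_fun (by fun_prop) continuous_const).mem_nhds hx
  have hderiv : deriv (fun y => a / (C * y + D) ^ 2) =ᶠ[𝓝 x]
      fun y => -2 * a * C / (C * y + D) ^ 3 := by
    filter_upwards [hnhds] with y hy
    simpa using (hasDerivAt_div_linear_pow a C D y 2 hy).deriv
  rw [hderiv.deriv_eq, (hasDerivAt_div_linear_pow (-2 * a * C) C D x 3 hx).deriv]
  ring

theorem stmt_19_general (beta gamma C D : ℝ) (hbeta : beta ≠ 0)
    (U : ℝ → ℝ)
    (hU : U = fun ε => 6 * gamma / beta * (C ^ 2 / (C * ε + D) ^ 2))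
    (ε : ℝ) (hden : C * ε + D ≠ 0) :
    beta * U ε ^ 2 - gamma * deriv (deriv U) ε = 0 := by
  have hU' : U = fun y => 6 * gamma / beta * C ^ 2 / (C * y + D) ^ 2 := by
    rw [hU]; funext y; ring
  rw [hU', deriv_deriv_div_linear_sq _ C D ε hden]
  field_simp
  ring

/-- Rational solution of the reduced coupled Boussinesq ODE: βU² − γU'' = 0. -/
theorem stmt_19 (beta gamma C D k : ℝ) (hbeta : beta ≠ 0) (hC : C ≠ 0) (hk : k = 0)
    (U : ℝ → ℝ)
    (hU : U = fun ε => 6 * gamma / beta * (C ^ 2 / (C * ε + D) ^ 2))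
    (ε : ℝ) (hden : C * ε + D ≠ 0) :
    beta * U ε ^ 2 - gamma * deriv (deriv U) ε = 0 :=
  stmt_19_general beta gamma C D hbeta U hU ε hden
end
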